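/- Let (K_n) be the Markov chain on ℝ³ \ {0} with K_{n+1} = a·K_n + (1-a)|K_n|·U_n, where (U_n) are i.i.d. uniform on S² and a ∈ (0,1). Then the increments D_{n+1} = log|K_{n+1}| - log|K_n| are i.i.d., each distributed as log|a·y + (1-a)·U| for any fixed y ∈ S² with U uniform on S². -/

import Mathlib

/-!
Write `D n = g (K n) (U n)` with `g x z = log ‖a • x + ((1 - a) * ‖x‖) • z‖ - log ‖x‖`.
For `x ≠ 0` the law of `g x U` does not depend on `x`: `g (r • x) = g x` for `r > 0` off the
single point `z` where the step vanishes (a null set, the uniform law having no atoms), and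
`g (R x) (R z) = g x z` for rotations `R`, which preserve the uniform law. Since `K n` is
measurable for `σ(U i : i < n)`, which is independent of `U n`, freezing `K n` shows that `D n`
has this fixed law and is independent of `σ(U i : i < n)`; as `D 0, …, D (n - 1)` are measurable
for that σ-algebra, the increments are i.i.d. The chain a.s. never reaches `0`, where the
scaling argument would break down, for the same reason: from `x ≠ 0` it reaches `0` only for one
value of `U`.
-/

noncomputable section
open MeasureTheory ProbabilityTheory
open scoped ENNReal

namespace ProbabilityTheory

section Freezing

variable {Ω α β γ : Type*} {m mΩ : MeasurableSpace Ω} [MeasurableSpace α] [mβ : MeasurableSpace β]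
  [mγ : MeasurableSpace γ] {P : Measure Ω} {X : Ω → α} {Y : Ω → β} {t : Set Ω}

theorem map_restrict_prodMk_eq_prod [IsFiniteMeasure P] (hm : m ≤ mΩ) (hX : Measurable[m] X)
    (hY : Measurable Y) (hXY : Indep m (MeasurableSpace.comap Y mβ) P) (ht : MeasurableSet[m] t) :
    (P.restrict t).map (fun ω => (X ω, Y ω)) = ((P.restrict t).map X).prod (P.map Y) := by
  have hX' : Measurable X := hX.mono hm le_rfl
  refine (Measure.prod_eq fun A B hA hB => ?_).symm
  rw [Measure.map_apply (hX'.prodMk hY) (hA.prod hB), Measure.map_apply hX' hA,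
    Measure.map_apply hY hB, Measure.restrict_apply (hX'.prodMk hY (hA.prod hB)),
    Measure.restrict_apply (hX' hA), Set.mk_preimage_prod, Set.inter_right_comm,
    Set.inter_comm _ t]
  exact (Indep_iff _ _ P).1 hXY _ _ (ht.inter (hX hA)) ⟨B, hB, rfl⟩

theorem measure_inter_preimage_prodMk_eq_setLIntegral [IsFiniteMeasure P] (hm : m ≤ mΩ)
    (hX : Measurable[m] X) (hY : Measurable Y) (hXY : Indep m (MeasurableSpace.comap Y mβ) P)
    (ht : MeasurableSet[m] t) {C : Set (α × β)} (hC : MeasurableSet C) :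
    P (t ∩ (fun ω => (X ω, Y ω)) ⁻¹' C) = ∫⁻ ω in t, P.map Y (Prod.mk (X ω) ⁻¹' C) ∂P := by
  have hX' : Measurable X := hX.mono hm le_rfl
  rw [Set.inter_comm, ← Measure.restrict_apply ((hX'.prodMk hY) hC),
    ← Measure.map_apply (hX'.prodMk hY) hC, map_restrict_prodMk_eq_prod hm hX hY hXY ht,
    Measure.prod_apply hC, lintegral_map (measurable_measure_prodMk_left hC) hX']

theorem indep_comap_and_map_eq_of_ae_map_eq [IsProbabilityMeasure P] (hm : m ≤ mΩ)
    (hX : Measurable[m] X) (hY : Measurable Y) (hXY : Indep m (MeasurableSpace.comap Y mβ) P)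
    {f : α → β → γ} (hf : Measurable (Function.uncurry f)) {ν : Measure γ}
    (hν : ∀ᵐ ω ∂P, (P.map Y).map (f (X ω)) = ν) :
    Indep m (MeasurableSpace.comap (fun ω => f (X ω) (Y ω)) mγ) P ∧
      P.map (fun ω => f (X ω) (Y ω)) = ν := by
  have hZ : Measurable fun ω => f (X ω) (Y ω) := hf.comp ((hX.mono hm le_rfl).prodMk hY)
  have key : ∀ t, MeasurableSet[m] t → ∀ B, MeasurableSet B →
      P (t ∩ (fun ω => f (X ω) (Y ω)) ⁻¹' B) = P t * ν B := by
    intro t ht B hB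
    calc P (t ∩ (fun ω => f (X ω) (Y ω)) ⁻¹' B)
        = ∫⁻ ω in t, P.map Y (f (X ω) ⁻¹' B) ∂P :=
          measure_inter_preimage_prodMk_eq_setLIntegral hm hX hY hXY ht (hf hB)
      _ = ∫⁻ _ in t, ν B ∂P := by
          refine setLIntegral_congr_fun_ae (hm t ht) (hν.mono fun ω hω _ => ?_)
          rw [← hω, Measure.map_apply hf.of_uncurry_left hB]
      _ = P t * ν B := by rw [setLIntegral_const, mul_comm]
  have hmap : P.map (fun ω => f (X ω) (Y ω)) = ν := by
    ext B hB
    rw [Measure.map_apply hZ hB, ← Set.univ_inter (_ ⁻¹' B), key _ MeasurableSet.univ B hB,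
      measure_univ, one_mul]
  refine ⟨(Indep_iff _ _ P).2 ?_, hmap⟩
  rintro t _ ht ⟨B, hB, rfl⟩
  rw [key t ht B hB, ← hmap, Measure.map_apply hZ hB]

end Freezing

theorem iIndep_of_indep_biSup_lt {Ω ι : Type*} {mΩ : MeasurableSpace Ω} [LinearOrder ι]
    {P : Measure Ω} [IsProbabilityMeasure P] {m : ι → MeasurableSpace Ω}
    (h : ∀ i, Indep (⨆ j < i, m j) (m i) P) : iIndep m P := by
  refine (iIndep_iff m P).2 fun S => ?_
  induction S using Finset.induction_on_max with
  | empty => simp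
  | insert i S hlt ih =>
    intro f hf
    have hS : MeasurableSet[⨆ j < i, m j] (⋂ j ∈ S, f j) :=
      .biInter S.countable_toSet fun j hj =>
        le_iSup₂ (f := fun j (_ : j < i) => m j) j (hlt j hj) _
          (hf j (Finset.mem_insert_of_mem hj))
    rw [Finset.set_biInter_insert, Finset.prod_insert fun hi => lt_irrefl i (hlt i hi),
      Set.inter_comm, (Indep_iff _ _ P).1 (h i) _ _ hS (hf i (Finset.mem_insert_self i S)),
      ih fun j hj => hf j (Finset.mem_insert_of_mem hj), mul_comm]

section DrivenChain

variable {Ω α β γ : Type*} {mΩ : MeasurableSpace Ω} [MeasurableSpace α] [mβ : MeasurableSpace β]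
  [MeasurableSpace γ] {P : Measure Ω} {U : ℕ → Ω → β} {n : ℕ}

abbrev sigmaBefore (U : ℕ → Ω → β) (n : ℕ) : MeasurableSpace Ω :=
  ⨆ i < n, MeasurableSpace.comap (U i) mβ

theorem sigmaBefore_mono : Monotone (sigmaBefore U) := fun _ _ hnm =>
  biSup_mono fun _ hi => lt_of_lt_of_le hi hnm

theorem sigmaBefore_le (hU : ∀ i, Measurable (U i)) (n : ℕ) : sigmaBefore U n ≤ mΩ :=
  iSup₂_le fun i _ => (hU i).comap_le

theorem measurable_sigmaBefore {i : ℕ} (hi : i < n) : Measurable[sigmaBefore U n] (U i) :=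
  measurable_iff_comap_le.2
    (le_iSup₂ (f := fun j (_ : j < n) => MeasurableSpace.comap (U j) mβ) i hi)

theorem measurable_sigmaBefore_succ {Y : Ω → α} {g : α → β → γ}
    (hg : Measurable (Function.uncurry g)) (hY : Measurable[sigmaBefore U n] Y) :
    Measurable[sigmaBefore U (n + 1)] fun ω => g (Y ω) (U n ω) :=
  hg.comp ((hY.mono (sigmaBefore_mono n.le_succ) le_rfl).prodMk
    (measurable_sigmaBefore n.lt_succ_self))

theorem indep_sigmaBefore (hU : ∀ i, Measurable (U i)) (hind : iIndepFun U P) (n : ℕ) :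
    Indep (sigmaBefore U n) (MeasurableSpace.comap (U n) mβ) P := by
  have := indep_iSup_of_disjoint (fun i => (hU i).comap_le) ((iIndepFun_iff_iIndep _ _ _).1 hind)
    (Set.disjoint_singleton_right.2 (lt_irrefl n) : Disjoint (Set.Iio n) {n})
  rwa [iSup_singleton] at this

variable {X : ℕ → Ω → α} {step : α → β → α} {x₀ : α}

theorem measurable_sigmaBefore_of_eq_step (hstep : Measurable (Function.uncurry step))
    (hX0 : ∀ ω, X 0 ω = x₀) (hX : ∀ n ω, X (n + 1) ω = step (X n ω) (U n ω)) (n : ℕ) :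
    Measurable[sigmaBefore U n] (X n) := by
  induction n with
  | zero => simp [funext hX0]
  | succ n ih => simpa [funext (hX n)] using measurable_sigmaBefore_succ hstep ih

variable [IsProbabilityMeasure P] {μ : Measure β}

theorem ae_mem_of_measure_step_notMem_eq_zero (hU : ∀ i, Measurable (U i))
    (hind : iIndepFun U P) (hlaw : ∀ i, P.map (U i) = μ)
    (hstep : Measurable (Function.uncurry step))
    (hX0 : ∀ ω, X 0 ω = x₀) (hX : ∀ n ω, X (n + 1) ω = step (X n ω) (U n ω))
    {S : Set α} (hS : MeasurableSet S) (hx₀ : x₀ ∈ S)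
    (hleave : ∀ x ∈ S, μ {z | step x z ∉ S} = 0)
    (n : ℕ) : ∀ᵐ ω ∂P, X n ω ∈ S := by
  induction n with
  | zero => simp [hX0, hx₀]
  | succ n ih =>
    have hC : MeasurableSet {p : α × β | step p.1 p.2 ∉ S} := (hstep hS).compl
    have h := measure_inter_preimage_prodMk_eq_setLIntegral (sigmaBefore_le hU n)
      (measurable_sigmaBefore_of_eq_step hstep hX0 hX n) (hU n) (indep_sigmaBefore hU hind n)
      MeasurableSet.univ hC
    rw [Set.univ_inter, Measure.restrict_univ, hlaw n] at h
    rw [ae_iff]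
    simp only [hX]
    refine h.trans (lintegral_eq_zero_of_ae_eq_zero ?_)
    filter_upwards [ih] with ω hω using hleave _ hω

theorem iIndepFun_and_map_eq_of_ae_map_eq (hU : ∀ i, Measurable (U i))
    (hind : iIndepFun U P) (hlaw : ∀ i, P.map (U i) = μ)
    (hstep : Measurable (Function.uncurry step))
    (hX0 : ∀ ω, X 0 ω = x₀) (hX : ∀ n ω, X (n + 1) ω = step (X n ω) (U n ω))
    {g : α → β → γ} (hg : Measurable (Function.uncurry g)) {ν : Measure γ}
    (hν : ∀ n, ∀ᵐ ω ∂P, μ.map (g (X n ω)) = ν) :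
    iIndepFun (fun n ω => g (X n ω) (U n ω)) P ∧ ∀ n, P.map (fun ω => g (X n ω) (U n ω)) = ν := by
  have hX_meas := measurable_sigmaBefore_of_eq_step hstep hX0 hX
  have key n := indep_comap_and_map_eq_of_ae_map_eq (sigmaBefore_le hU n) (hX_meas n) (hU n)
    (indep_sigmaBefore hU hind n) hg (by simpa only [hlaw n] using hν n)
  refine ⟨(iIndepFun_iff_iIndep _ _ _).2 (iIndep_of_indep_biSup_lt fun n => ?_),
    fun n => (key n).2⟩
  refine indep_of_indep_of_le_left (key n).1 (iSup₂_le fun i hi => ?_)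
  exact ((measurable_sigmaBefore_succ hg (hX_meas i)).mono (sigmaBefore_mono hi) le_rfl).comap_le

end DrivenChain

end ProbabilityTheory

section SphereMeasure

variable {E : Type*} [NormedAddCommGroup E] [NormedSpace ℝ E] [MeasurableSpace E] [BorelSpace E]

theorem map_linearIsometryEquiv_hausdorffMeasure_restrict_sphere (R : E ≃ₗᵢ[ℝ] E) (d r : ℝ) :
    (μH[d].restrict (Metric.sphere (0 : E) r)).map R = μH[d].restrict (Metric.sphere 0 r) := by
  have h := (R.toIsometryEquiv.measurePreserving_hausdorffMeasure d).restrict_preimage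
    (s := Metric.sphere (0 : E) r) Metric.isClosed_sphere.measurableSet
  simpa [R.preimage_sphere] using h.map_eq

end SphereMeasure

section RadialStep

variable {E : Type*} [NormedAddCommGroup E] [InnerProductSpace ℝ E] (b c : ℝ)

def radialStep (x z : E) : E := b • x + (c * ‖x‖) • z

def logNormIncrement (x z : E) : ℝ := Real.log ‖radialStep b c x z‖ - Real.log ‖x‖

variable {b c} {x y z : E}

theorem radialStep_map (R : E ≃ₗᵢ[ℝ] E) :
    radialStep b c (R x) (R z) = R (radialStep b c x z) := by
  simp [radialStep]

theorem radialStep_smul {r : ℝ} (hr : 0 ≤ r) :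
    radialStep b c (r • x) z = r • radialStep b c x z := by
  simp only [radialStep, norm_smul, Real.norm_of_nonneg hr, smul_add, smul_smul]
  ring_nf

theorem logNormIncrement_map (R : E ≃ₗᵢ[ℝ] E) :
    logNormIncrement b c (R x) (R z) = logNormIncrement b c x z := by
  simp [logNormIncrement, radialStep_map]

theorem logNormIncrement_smul {r : ℝ} (hr : 0 < r) (hx : x ≠ 0) (hxz : radialStep b c x z ≠ 0) :
    logNormIncrement b c (r • x) z = logNormIncrement b c x z := by
  have hr' : ‖r‖ ≠ 0 := norm_ne_zero_iff.2 hr.ne'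
  rw [logNormIncrement, logNormIncrement, radialStep_smul hr.le, norm_smul, norm_smul,
    Real.log_mul hr' (norm_ne_zero_iff.2 hxz), Real.log_mul hr' (norm_ne_zero_iff.2 hx)]
  ring

variable [MeasurableSpace E]

theorem measure_radialStep_eq_zero {μ : Measure E} [NullSingletonClass μ] (hc : c ≠ 0)
    (hx : x ≠ 0) :
    μ {z | radialStep b c x z = 0} = 0 := by
  refine Set.Subsingleton.measure_zero (fun z hz z' hz' => ?_) μ
  refine smul_right_injective E (mul_ne_zero hc (norm_ne_zero_iff.2 hx)) ?_
  exact add_left_cancel (hz.trans hz'.symm : radialStep b c x z = radialStep b c x z')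

variable [BorelSpace E] [SecondCountableTopology E] (b c)

theorem measurable_radialStep : Measurable (Function.uncurry (radialStep (E := E) b c)) :=
  (measurable_fst.const_smul b).add ((measurable_fst.norm.const_mul c).smul measurable_snd)

theorem measurable_logNormIncrement :
    Measurable (Function.uncurry (logNormIncrement (E := E) b c)) :=
  (measurable_radialStep b c).norm.log.sub measurable_fst.norm.log

variable {b c} {μ : Measure E}

theorem map_logNormIncrement_eq_of_norm_eq (hμ : ∀ R : E ≃ₗᵢ[ℝ] E, μ.map R = μ)
    (h : ‖x‖ = ‖y‖) : μ.map (logNormIncrement b c x) = μ.map (logNormIncrement b c y) := by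
  set R := Submodule.reflection (ℝ ∙ (x - y))ᗮ
  have hRx : R x = y := Submodule.reflection_sub h
  conv_rhs => rw [← hμ R, Measure.map_map ((measurable_logNormIncrement b c).of_uncurry_left)
    R.continuous.measurable]
  congr 1
  funext z
  simp [← hRx, logNormIncrement_map]

theorem map_logNormIncrement_eq [NullSingletonClass μ] (hμ : ∀ R : E ≃ₗᵢ[ℝ] E, μ.map R = μ)
    (hc : c ≠ 0) (hx : x ≠ 0) (hy : y ≠ 0) :
    μ.map (logNormIncrement b c x) = μ.map (logNormIncrement b c y) := by
  have hr : 0 < ‖y‖ / ‖x‖ := div_pos (norm_pos_iff.2 hy) (norm_pos_iff.2 hx)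
  have hscale : logNormIncrement b c ((‖y‖ / ‖x‖) • x) =ᵐ[μ] logNormIncrement b c x := by
    refine (measure_eq_zero_iff_ae_notMem.1 (measure_radialStep_eq_zero (b := b) hc hx)).mono
      fun z hz => logNormIncrement_smul hr hx hz
  rw [← Measure.map_congr hscale]
  refine map_logNormIncrement_eq_of_norm_eq hμ ?_
  rw [norm_smul, Real.norm_of_nonneg hr.le, div_mul_cancel₀ _ (norm_ne_zero_iff.2 hx)]

end RadialStep

theorem increments_iid
    (a : ℝ) (ha : a ∈ Set.Ioo (0 : ℝ) 1)
    (u : Measure (EuclideanSpace ℝ (Fin 3)))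
    (hu : u = ENNReal.ofReal (4 * Real.pi)⁻¹ •
      (μH[2] : Measure (EuclideanSpace ℝ (Fin 3))).restrict
        (Metric.sphere (0 : EuclideanSpace ℝ (Fin 3)) 1))
    (Ω : Type*) [MeasurableSpace Ω] (P : Measure Ω) [IsProbabilityMeasure P]
    (U : ℕ → Ω → EuclideanSpace ℝ (Fin 3))
    (hUmeas : ∀ n, Measurable (U n))
    (hUindep : iIndepFun U P)
    (hUlaw : ∀ n, Measure.map (U n) P = u)
    (k : EuclideanSpace ℝ (Fin 3)) (hk : k ≠ 0)
    (K : ℕ → Ω → EuclideanSpace ℝ (Fin 3))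
    (hK0 : ∀ ω, K 0 ω = k)
    (hKrec : ∀ n ω, K (n + 1) ω = a • K n ω + ((1 - a) * ‖K n ω‖) • U n ω)
    (D : ℕ → Ω → ℝ)
    (hD : ∀ n ω, D n ω = Real.log ‖K (n + 1) ω‖ - Real.log ‖K n ω‖) :
    iIndepFun D P ∧
      ∀ (n : ℕ) (y : EuclideanSpace ℝ (Fin 3)), ‖y‖ = 1 →
        Measure.map (D n) P =
          Measure.map (fun z => Real.log ‖a • y + (1 - a) • z‖) u := by
  have hc : 1 - a ≠ 0 := (sub_pos.2 ha.2).ne'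
  have : NullSingletonClass (μH[2] : Measure (EuclideanSpace ℝ (Fin 3))) :=
    Measure.nullSingletonClass_hausdorff _ two_pos
  have : NullSingletonClass u := ⟨fun p => by simp [hu]⟩
  have hrot : ∀ R : EuclideanSpace ℝ (Fin 3) ≃ₗᵢ[ℝ] EuclideanSpace ℝ (Fin 3), u.map R = u :=
    fun R => by rw [hu, Measure.map_smul, map_linearIsometryEquiv_hausdorffMeasure_restrict_sphere]
  have hK : ∀ n, ∀ᵐ ω ∂P, K n ω ∈ ({0}ᶜ : Set _) :=
    ae_mem_of_measure_step_notMem_eq_zero hUmeas hUindep hUlaw (measurable_radialStep a (1 - a))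
      hK0 hKrec (measurableSet_singleton 0).compl hk
      fun x hx => by simpa using measure_radialStep_eq_zero hc hx
  have hD' : D = fun n ω => logNormIncrement a (1 - a) (K n ω) (U n ω) := by
    funext n ω
    rw [hD, logNormIncrement, radialStep, ← hKrec]
  obtain ⟨hind, hlaw⟩ := iIndepFun_and_map_eq_of_ae_map_eq hUmeas hUindep hUlaw
    (measurable_radialStep a (1 - a)) hK0 hKrec (measurable_logNormIncrement a (1 - a))
    (ν := u.map (logNormIncrement a (1 - a) k))
    fun n => (hK n).mono fun ω hω => map_logNormIncrement_eq hrot hc hω hk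
  refine ⟨hD' ▸ hind, fun n y hy => ?_⟩
  have hy0 : y ≠ 0 := norm_ne_zero_iff.1 (hy ▸ one_ne_zero)
  rw [hD', hlaw n, map_logNormIncrement_eq hrot hc hk hy0]
  congr 1
  funext z
  simp [logNormIncrement, radialStep, hy]
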